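/- arXiv:1403.4827 — 4 statements merged into one kernel-verified Lean document; each statement's English description precedes it below -/
import Mathlib

section
/- Let A be a real n×p matrix, y ∈ ℝⁿ and t > 0, and let F(x) = ‖x‖₁ + ‖Ax − y‖²/(2t) for x ∈ ℝᵖ. If x⁽¹⁾ and x⁽²⁾ are both global minimizers of F over ℝᵖ, then Ax⁽¹⁾ = Ax⁽²⁾, ‖x⁽¹⁾‖₁ = ‖x⁽²⁾‖₁, and consequently Aᵀ(y − Ax⁽¹⁾)/t = Aᵀ(y − Ax⁽²⁾)/t, i.e. the fitted vector Ax, the l1-norm of x, and the dual vector ξ = Aᵀ(y − Ax)/t are constant on the set of minimizers. -/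
open Matrix MeasureTheory

/-- The Basis Pursuit De-noising objective function
`F(x) = ‖x‖₁ + ‖Ax − y‖²/(2t)`. -/
noncomputable def obj (n p : ℕ) (A : Matrix (Fin n) (Fin p) ℝ) (y : Fin n → ℝ) (t : ℝ)
    (x : Fin p → ℝ) : ℝ :=
  (∑ i, |x i|) + (∑ j, ((A *ᵥ x) j - y j) ^ 2) / (2 * t)

/-- On the set of global minimizers of `F`, the fitted vector `Ax`, the ℓ¹-norm `‖x‖₁`
and the dual vector `ξ = Aᵀ(y − Ax)/t` are constant. -/
theorem stmt1 (n p : ℕ) (A : Matrix (Fin n) (Fin p) ℝ) (y : Fin n → ℝ) (t : ℝ)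
    (ht : 0 < t) (x₁ x₂ : Fin p → ℝ)
    (h₁ : ∀ x : Fin p → ℝ, obj n p A y t x₁ ≤ obj n p A y t x)
    (h₂ : ∀ x : Fin p → ℝ, obj n p A y t x₂ ≤ obj n p A y t x) :
    A *ᵥ x₁ = A *ᵥ x₂ ∧ (∑ i, |x₁ i|) = (∑ i, |x₂ i|) ∧
      (fun i => (Aᵀ *ᵥ (y - A *ᵥ x₁)) i / t) = (fun i => (Aᵀ *ᵥ (y - A *ᵥ x₂)) i / t) := by
  have heq : obj n p A y t x₁ = obj n p A y t x₂ := le_antisymm (h₁ x₂) (h₂ x₁)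
  set z : Fin p → ℝ := fun i => (x₁ i + x₂ i) / 2 with hz
  have hAz : ∀ j, (A *ᵥ z) j = ((A *ᵥ x₁) j + (A *ᵥ x₂) j) / 2 := by
    intro j
    simp only [mulVec, dotProduct, hz]
    rw [← Finset.sum_add_distrib, Finset.sum_div]
    congr 1; ext k; ring
  -- ℓ¹ part at midpoint
  have hl1 : (∑ i, |z i|) ≤ ((∑ i, |x₁ i|) + (∑ i, |x₂ i|)) / 2 := by
    rw [← Finset.sum_add_distrib, Finset.sum_div]
    apply Finset.sum_le_sum
    intro i _
    calc |z i| = |(x₁ i + x₂ i) / 2| := rfl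
      _ ≤ (|x₁ i| + |x₂ i|) / 2 := by
          rw [abs_div]
          have := abs_add_le (x₁ i) (x₂ i)
          have h2 : |(2:ℝ)| = 2 := by norm_num
          rw [h2]
          linarith
  -- quadratic part at midpoint
  have hquad : (∑ j, ((A *ᵥ z) j - y j) ^ 2)
      = ((∑ j, ((A *ᵥ x₁) j - y j) ^ 2) + (∑ j, ((A *ᵥ x₂) j - y j) ^ 2)) / 2
        - (∑ j, ((A *ᵥ x₁) j - (A *ᵥ x₂) j) ^ 2) / 4 := by
    rw [← Finset.sum_add_distrib, Finset.sum_div, Finset.sum_div,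
      ← Finset.sum_sub_distrib]
    apply Finset.sum_congr rfl
    intro j _
    rw [hAz j]
    ring
  have hsumsq_nonneg : (0:ℝ) ≤ ∑ j, ((A *ᵥ x₁) j - (A *ᵥ x₂) j) ^ 2 :=
    Finset.sum_nonneg fun j _ => sq_nonneg _
  have hmid := h₁ z
  have hsumsq : (∑ j, ((A *ᵥ x₁) j - (A *ᵥ x₂) j) ^ 2) = 0 := by
    have h2t : (0:ℝ) < 2 * t := by linarith
    have hne : (2 * t) ≠ 0 := ne_of_gt h2t
    simp only [obj] at hmid heq
    rw [hquad] at hmid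
    by_contra hS
    have hSpos : 0 < ∑ j, ((A *ᵥ x₁) j - (A *ᵥ x₂) j) ^ 2 :=
      lt_of_le_of_ne hsumsq_nonneg (Ne.symm hS)
    have hdiv : ((∑ j, ((A *ᵥ x₁) j - y j) ^ 2 + ∑ j, ((A *ᵥ x₂) j - y j) ^ 2) / 2
        - (∑ j, ((A *ᵥ x₁) j - (A *ᵥ x₂) j) ^ 2) / 4) / (2 * t)
        = ((∑ j, ((A *ᵥ x₁) j - y j) ^ 2) / (2 * t)
            + (∑ j, ((A *ᵥ x₂) j - y j) ^ 2) / (2 * t)) / 2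
          - ((∑ j, ((A *ᵥ x₁) j - (A *ᵥ x₂) j) ^ 2) / (2 * t)) / 4 := by
      field_simp
    rw [hdiv] at hmid
    have hSdiv : 0 < (∑ j, ((A *ᵥ x₁) j - (A *ᵥ x₂) j) ^ 2) / (2 * t) :=
      div_pos hSpos h2t
    linarith
  have hA : A *ᵥ x₁ = A *ᵥ x₂ := by
    funext j
    have := (Finset.sum_eq_zero_iff_of_nonneg (fun j _ => sq_nonneg _)).mp hsumsq j
      (Finset.mem_univ j)
    have := pow_eq_zero_iff (n := 2) (by norm_num) |>.mp this
    linarith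
  refine ⟨hA, ?_, by rw [hA]⟩
  simp only [obj, hA] at heq
  linarith
end

section
/- Let A be a real n×p matrix, y ∈ ℝⁿ and t > 0, let F(x) = ‖x‖₁ + ‖Ax − y‖²/(2t), let x* be a global minimizer of F, set m = F(x*) and ξ = Aᵀ(y − Ax*)/t. Then for every x ∈ ℝᵖ, F(x) − m = Σᵢ₌₁ᵖ (|xᵢ| − xᵢ ξᵢ) + ‖A(x − x*)‖²/(2t). (Note that |xᵢ| − xᵢξᵢ = |xᵢ|(1 − sgn(xᵢ)ξᵢ).) -/
open Matrix MeasureTheory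

private lemma aux_zero (s K : ℝ) (hK : 0 ≤ K)
    (h : ∀ ε : ℝ, 0 < ε → ε ≤ 1 → |s| ≤ ε * K) : s = 0 := by
  by_contra hs
  have h0 : 0 < |s| := abs_pos.mpr hs
  have hK1 : (0:ℝ) < 2 * (K + 1) := by linarith
  set ε := min 1 (|s| / (2 * (K + 1))) with hεdef
  have hε0 : 0 < ε := lt_min one_pos (by positivity)
  have h1 := h ε hε0 (min_le_left _ _)
  have hε2 : ε ≤ |s| / (2 * (K + 1)) := min_le_right _ _
  have h2 : |s| ≤ |s| / (2 * (K + 1)) * K :=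
    h1.trans (mul_le_mul_of_nonneg_right hε2 hK)
  rw [div_mul_eq_mul_div, le_div_iff₀ hK1] at h2
  nlinarith

/-- With `m = F(x*)` and `ξ = Aᵀ(y − Ax*)/t` for a minimizer `x*`, for every `x`,
`F(x) − m = Σᵢ (|xᵢ| − xᵢξᵢ) + ‖A(x − x*)‖²/(2t)`. -/
theorem stmt2 (n p : ℕ) (A : Matrix (Fin n) (Fin p) ℝ) (y : Fin n → ℝ) (t : ℝ)
    (ht : 0 < t) (xs : Fin p → ℝ)
    (hmin : ∀ x : Fin p → ℝ, obj n p A y t xs ≤ obj n p A y t x)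
    (m : ℝ) (hm : m = obj n p A y t xs)
    (ξ : Fin p → ℝ) (hξ : ∀ i, ξ i = (Aᵀ *ᵥ (y - A *ᵥ xs)) i / t) :
    ∀ x : Fin p → ℝ,
      obj n p A y t x - m =
        (∑ i, (|x i| - x i * ξ i)) + (∑ j, ((A *ᵥ (x - xs)) j) ^ 2) / (2 * t) := by
  have ht' : t ≠ 0 := ne_of_gt ht
  set v := A *ᵥ xs with hv
  set L := ∑ i, |xs i| with hL
  set D := ∑ j, (v j - y j) * v j with hD
  set q := ∑ j, (v j) ^ 2 with hq
  have hobj : obj n p A y t xs = L + (∑ j, (v j - y j) ^ 2) / (2 * t) := rfl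
  -- value at scaled points
  have hscale : ∀ e : ℝ, -1 ≤ e →
      obj n p A y t ((1 + e) • xs)
        = (1 + e) * L + ((∑ j, (v j - y j) ^ 2) + 2 * e * D + e ^ 2 * q) / (2 * t) := by
    intro e he
    have h1e : 0 ≤ 1 + e := by linarith
    unfold obj
    congr 1
    · rw [hL, Finset.mul_sum]
      refine Finset.sum_congr rfl fun i _ => ?_
      simp [abs_mul, abs_of_nonneg h1e]
    · congr 1
      have hAv : ∀ j, (A *ᵥ ((1 + e) • xs)) j = (1 + e) * v j := by
        intro j
        rw [Matrix.mulVec_smul]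
        simp [hv]
      rw [hD, hq, Finset.mul_sum, Finset.mul_sum, ← Finset.sum_add_distrib,
        ← Finset.sum_add_distrib]
      refine Finset.sum_congr rfl fun j _ => ?_
      rw [hAv j]; ring
  -- the basic inequality from minimality
  have hineq : ∀ e : ℝ, -1 ≤ e → 0 ≤ e * (L + D / t) + e ^ 2 * (q / (2 * t)) := by
    intro e he
    have h1 := hmin ((1 + e) • xs)
    rw [hscale e he, hobj] at h1
    have heq : e * (L + D / t) + e ^ 2 * (q / (2 * t))
        = ((1 + e) * L + ((∑ j, (v j - y j) ^ 2) + 2 * e * D + e ^ 2 * q) / (2 * t))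
          - (L + (∑ j, (v j - y j) ^ 2) / (2 * t)) := by
      field_simp
      ring
    rw [heq]
    linarith
  have hq0 : 0 ≤ q := Finset.sum_nonneg fun j _ => sq_nonneg _
  have hK : 0 ≤ q / (2 * t) := by positivity
  have hs0 : L + D / t = 0 := by
    apply aux_zero _ _ hK
    intro ε hε hε1
    rw [abs_le]
    constructor
    · have h1 := hineq ε (by linarith)
      nlinarith
    · have h1 := hineq (-ε) (by linarith)
      nlinarith
  have hD0 : D = -(t * L) := by
    have : D / t = -L := by linarith
    field_simp at this
    linarith
  -- main identity
  intro x
  set u := A *ᵥ x with hu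
  have hsub : ∀ j, (A *ᵥ (x - xs)) j = u j - v j := by
    intro j
    rw [Matrix.mulVec_sub]
    simp [hu, hv]
  have hxi : ∑ i, x i * ξ i = -(∑ j, u j * (v j - y j)) / t := by
    have hdp : x ⬝ᵥ (Aᵀ *ᵥ (y - A *ᵥ xs)) = (A *ᵥ x) ⬝ᵥ (y - A *ᵥ xs) := by
      rw [Matrix.dotProduct_mulVec, Matrix.vecMul_transpose]
    simp only [dotProduct, Pi.sub_apply] at hdp
    simp only [← hv, ← hu] at hdp
    simp_rw [hξ, ← mul_div_assoc]
    rw [← Finset.sum_div]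
    rw [hdp, ← Finset.sum_neg_distrib]
    congr 1
    refine Finset.sum_congr rfl fun j _ => ?_
    ring
  have hsum : ∑ j, (u j - y j) ^ 2
      = (∑ j, (v j - y j) ^ 2) + (∑ j, (u j - v j) ^ 2)
        + 2 * (∑ j, u j * (v j - y j)) - 2 * D := by
    rw [hD, Finset.mul_sum, Finset.mul_sum, ← Finset.sum_add_distrib,
      ← Finset.sum_add_distrib, ← Finset.sum_sub_distrib]
    refine Finset.sum_congr rfl fun j _ => ?_
    ring
  rw [hm, hobj]
  unfold obj
  simp_rw [hsub]
  rw [Finset.sum_sub_distrib, hxi, ← hu, hsum, hD0]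
  field_simp
  ring
end

section
/- Let A be a real n×p matrix, y ∈ ℝⁿ and t > 0, let F(x) = ‖x‖₁ + ‖Ax − y‖²/(2t), let x* be a global minimizer of F, set m = F(x*), ξ = Aᵀ(y − Ax*)/t, and I₀ = {i : x*ᵢ = 0}. If x ∈ ℝᵖ is such that for every i with x*ᵢ ≠ 0 the coordinate xᵢ has the same strict sign as x*ᵢ (xᵢ > 0 when x*ᵢ > 0 and xᵢ < 0 when x*ᵢ < 0), then F(x) − m = Σ_{i∈I₀} (|xᵢ| − xᵢ ξᵢ) + ‖A(x − x*)‖²/(2t). -/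
open Matrix MeasureTheory

lemma cross (n p : ℕ) (A : Matrix (Fin n) (Fin p) ℝ) (c : Fin n → ℝ) (d : Fin p → ℝ) :
    ∑ j, (A *ᵥ d) j * c j = ∑ i, d i * (Aᵀ *ᵥ c) i := by
  simp only [mulVec, dotProduct, transpose_apply, Finset.sum_mul, Finset.mul_sum]
  rw [Finset.sum_comm]
  congr 1; ext i; congr 1; ext j; ring

lemma key_identity (n p : ℕ) (A : Matrix (Fin n) (Fin p) ℝ) (y : Fin n → ℝ) (t : ℝ)
    (ht : 0 < t) (xs : Fin p → ℝ) (ξ : Fin p → ℝ)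
    (hξ : ∀ i, ξ i = (Aᵀ *ᵥ (y - A *ᵥ xs)) i / t) (x : Fin p → ℝ) :
    obj n p A y t x - obj n p A y t xs =
      (∑ i, (|x i| - |xs i| - (x i - xs i) * ξ i)) +
        (∑ j, ((A *ᵥ (x - xs)) j) ^ 2) / (2 * t) := by
  have ht' : (2 * t) ≠ 0 := by positivity
  have hξ' : ∀ i, (Aᵀ *ᵥ (y - A *ᵥ xs)) i = t * ξ i := by
    intro i; rw [hξ i]; field_simp
  have e2 : ∑ j, (A *ᵥ (x - xs)) j * ((A *ᵥ xs) j - y j)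
      = -(t * ∑ i, (x i - xs i) * ξ i) := by
    have h := cross n p A (y - A *ᵥ xs) (x - xs)
    simp only [hξ', Pi.sub_apply] at h
    rw [Finset.mul_sum]
    rw [show (∑ j, (A *ᵥ (x - xs)) j * ((A *ᵥ xs) j - y j))
        = -∑ j, (A *ᵥ (x - xs)) j * ((y - A *ᵥ xs) j) by
      rw [← Finset.sum_neg_distrib]; congr 1; ext j; simp [Pi.sub_apply]; ring]
    simp only [Pi.sub_apply]; rw [h]
    rw [neg_inj]
    congr 1; ext i; ring
  have e1 : ∑ j, ((A *ᵥ x) j - y j) ^ 2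
      = ∑ j, ((A *ᵥ (x - xs)) j) ^ 2
        + 2 * ∑ j, (A *ᵥ (x - xs)) j * ((A *ᵥ xs) j - y j)
        + ∑ j, ((A *ᵥ xs) j - y j) ^ 2 := by
    rw [Finset.mul_sum, ← Finset.sum_add_distrib, ← Finset.sum_add_distrib]
    congr 1; ext j
    rw [mulVec_sub, Pi.sub_apply]; ring
  have e3 : ∑ i, (|x i| - |xs i| - (x i - xs i) * ξ i)
      = (∑ i, |x i|) - (∑ i, |xs i|) - ∑ i, (x i - xs i) * ξ i := by
    rw [Finset.sum_sub_distrib, Finset.sum_sub_distrib]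
  unfold obj
  rw [e1, e2, e3]
  field_simp
  ring

lemma aux_nonneg (a C δ : ℝ) (hC : 0 ≤ C) (hδ : 0 < δ)
    (h : ∀ s : ℝ, 0 < s → s < δ → 0 ≤ a + s * C) : 0 ≤ a := by
  by_contra h'
  push_neg at h'
  set s := min (δ / 2) (-a / (2 * (C + 1))) with hs
  have hs1 : 0 < s := by
    refine lt_min (by positivity) (div_pos (by linarith) (by positivity))
  have hs2 : s < δ := lt_of_le_of_lt (min_le_left _ _) (by linarith)
  have hs3 : s ≤ -a / (2 * (C + 1)) := min_le_right _ _
  have := h s hs1 hs2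
  have hsC : s * C ≤ (-a / (2 * (C + 1))) * C :=
    mul_le_mul_of_nonneg_right hs3 hC
  have : (-a / (2 * (C + 1))) * C < -a := by
    rw [div_mul_eq_mul_div, div_lt_iff₀ (by positivity)]
    nlinarith
  linarith

lemma perturb_bound (n p : ℕ) (A : Matrix (Fin n) (Fin p) ℝ) (y : Fin n → ℝ) (t : ℝ)
    (ht : 0 < t) (xs : Fin p → ℝ)
    (hmin : ∀ x : Fin p → ℝ, obj n p A y t xs ≤ obj n p A y t x)
    (ξ : Fin p → ℝ) (hξ : ∀ i, ξ i = (Aᵀ *ᵥ (y - A *ᵥ xs)) i / t)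
    (i : Fin p) (s : ℝ) :
    0 ≤ |xs i + s| - |xs i| - s * ξ i + s ^ 2 * ((∑ j, (A j i) ^ 2) / (2 * t)) := by
  set x' := Function.update xs i (xs i + s) with hx'
  have h1 : ∑ k, (|x' k| - |xs k| - (x' k - xs k) * ξ k)
      = |xs i + s| - |xs i| - s * ξ i := by
    rw [Finset.sum_eq_single i]
    · simp [hx']
    · intro k _ hk; simp [hx', Function.update_of_ne hk]
    · simp
  have h2 : ∀ j, (A *ᵥ (x' - xs)) j = s * A j i := by
    intro j
    simp only [mulVec, dotProduct, Pi.sub_apply]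
    rw [Finset.sum_eq_single i]
    · simp [hx']; ring
    · intro k _ hk; simp [hx', Function.update_of_ne hk]
    · simp
  have h3 : ∑ j, ((A *ᵥ (x' - xs)) j) ^ 2 = s ^ 2 * ∑ j, (A j i) ^ 2 := by
    rw [Finset.mul_sum]; congr 1; ext j; rw [h2 j]; ring
  have hk := key_identity n p A y t ht xs ξ hξ x'
  have hge := hmin x'
  rw [h1, h3] at hk
  have : 0 ≤ |xs i + s| - |xs i| - s * ξ i + s ^ 2 * (∑ j, (A j i) ^ 2) / (2 * t) := by
    linarith
  calc (0:ℝ) ≤ _ := this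
    _ = _ := by ring

lemma xi_one (n p : ℕ) (A : Matrix (Fin n) (Fin p) ℝ) (y : Fin n → ℝ) (t : ℝ)
    (ht : 0 < t) (xs : Fin p → ℝ)
    (hmin : ∀ x : Fin p → ℝ, obj n p A y t xs ≤ obj n p A y t x)
    (ξ : Fin p → ℝ) (hξ : ∀ i, ξ i = (Aᵀ *ᵥ (y - A *ᵥ xs)) i / t)
    (i : Fin p) (hi : 0 < xs i) : ξ i = 1 := by
  set C := (∑ j, (A j i) ^ 2) / (2 * t) with hC
  have hC0 : 0 ≤ C := by positivity
  have h1 : 0 ≤ 1 - ξ i := by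
    apply aux_nonneg _ C 1 hC0 one_pos
    intro s hs0 hs1
    have hb := perturb_bound n p A y t ht xs hmin ξ hξ i s
    rw [abs_of_pos (by linarith), abs_of_pos hi] at hb
    have : 0 ≤ s * ((1 - ξ i) + s * C) := by nlinarith
    nlinarith [mul_pos hs0 hs0]
  have h2 : 0 ≤ ξ i - 1 := by
    apply aux_nonneg _ C (xs i) hC0 hi
    intro s hs0 hs1
    have hb := perturb_bound n p A y t ht xs hmin ξ hξ i (-s)
    rw [show xs i + -s = xs i - s by ring, abs_of_pos (by linarith), abs_of_pos hi] at hb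
    have : 0 ≤ s * ((ξ i - 1) + s * C) := by nlinarith
    nlinarith [mul_pos hs0 hs0]
  linarith

lemma xi_negone (n p : ℕ) (A : Matrix (Fin n) (Fin p) ℝ) (y : Fin n → ℝ) (t : ℝ)
    (ht : 0 < t) (xs : Fin p → ℝ)
    (hmin : ∀ x : Fin p → ℝ, obj n p A y t xs ≤ obj n p A y t x)
    (ξ : Fin p → ℝ) (hξ : ∀ i, ξ i = (Aᵀ *ᵥ (y - A *ᵥ xs)) i / t)
    (i : Fin p) (hi : xs i < 0) : ξ i = -1 := by
  set C := (∑ j, (A j i) ^ 2) / (2 * t) with hC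
  have hC0 : 0 ≤ C := by positivity
  have h1 : 0 ≤ 1 + ξ i := by
    apply aux_nonneg _ C 1 hC0 one_pos
    intro s hs0 hs1
    have hb := perturb_bound n p A y t ht xs hmin ξ hξ i (-s)
    rw [show xs i + -s = xs i - s by ring, abs_of_neg (by linarith), abs_of_neg hi] at hb
    have : 0 ≤ s * ((1 + ξ i) + s * C) := by nlinarith
    nlinarith [mul_pos hs0 hs0]
  have h2 : 0 ≤ -1 - ξ i := by
    apply aux_nonneg _ C (-xs i) hC0 (by linarith)
    intro s hs0 hs1
    have hb := perturb_bound n p A y t ht xs hmin ξ hξ i s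
    rw [abs_of_neg (by linarith), abs_of_neg hi] at hb
    have : 0 ≤ s * ((-1 - ξ i) + s * C) := by nlinarith
    nlinarith [mul_pos hs0 hs0]
  linarith

/-- With `m = F(x*)`, `ξ = Aᵀ(y − Ax*)/t` and `I₀ = {i : x*ᵢ = 0}` for a minimizer `x*`:
if `x` has the same strict signs as `x*` on the support of `x*`, then
`F(x) − m = Σ_{i ∈ I₀} (|xᵢ| − xᵢξᵢ) + ‖A(x − x*)‖²/(2t)`. -/
theorem stmt3 (n p : ℕ) (A : Matrix (Fin n) (Fin p) ℝ) (y : Fin n → ℝ) (t : ℝ)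
    (ht : 0 < t) (xs : Fin p → ℝ)
    (hmin : ∀ x : Fin p → ℝ, obj n p A y t xs ≤ obj n p A y t x)
    (m : ℝ) (hm : m = obj n p A y t xs)
    (ξ : Fin p → ℝ) (hξ : ∀ i, ξ i = (Aᵀ *ᵥ (y - A *ᵥ xs)) i / t) :
    ∀ x : Fin p → ℝ,
      (∀ i, 0 < xs i → 0 < x i) → (∀ i, xs i < 0 → x i < 0) →
      obj n p A y t x - m =
        (∑ i, if xs i = 0 then |x i| - x i * ξ i else 0) +
          (∑ j, ((A *ᵥ (x - xs)) j) ^ 2) / (2 * t) := by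
  intro x hpos hneg
  rw [hm, key_identity n p A y t ht xs ξ hξ x]
  congr 1
  apply Finset.sum_congr rfl
  intro i _
  rcases lt_trichotomy (xs i) 0 with h | h | h
  · rw [if_neg (ne_of_lt h), xi_negone n p A y t ht xs hmin ξ hξ i h,
      abs_of_neg (hneg i h), abs_of_neg h]
    ring
  · rw [if_pos h, h]
    simp
  · rw [if_neg (ne_of_gt h), xi_one n p A y t ht xs hmin ξ hξ i h,
      abs_of_pos (hpos i h), abs_of_pos h]
    ring
end

section
/- Let A be a real n×p matrix, y ∈ ℝⁿ and t > 0, let F(x) = ‖x‖₁ + ‖Ax − y‖²/(2t), let x* be a global minimizer of F, ξ = Aᵀ(y − Ax*)/t, S = {i : x*ᵢ ≠ 0}, I₀ = {i : x*ᵢ = 0} and ∂I₀ = {i ∈ I₀ : |ξᵢ| = 1}. If the Gram matrix (⟨Aeᵢ, Aeⱼ⟩)_{i,j ∈ S∪∂I₀} is invertible (equivalently, the columns of A indexed by S∪∂I₀ are linearly independent), then x* is the unique global minimizer of F. -/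
open Matrix MeasureTheory

/-- Expansion of the objective along a coordinate perturbation. -/
lemma obj_perturb (n p : ℕ) (A : Matrix (Fin n) (Fin p) ℝ) (y : Fin n → ℝ) (t : ℝ)
    (ht : 0 < t) (x : Fin p → ℝ) (i : Fin p) (s : ℝ) :
    obj n p A y t (fun j => x j + s * (if j = i then 1 else 0)) =
      obj n p A y t x + (|x i + s| - |x i|)
        - s * ((Aᵀ *ᵥ (y - A *ᵥ x)) i / t) + s ^ 2 * ((∑ k, (A k i) ^ 2) / (2 * t)) := by
  have hAv : ∀ k, (A *ᵥ fun j => x j + s * (if j = i then 1 else 0)) k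
      = (A *ᵥ x) k + s * A k i := by
    intro k
    simp only [mulVec, dotProduct]
    rw [show (∑ j, A k j * (x j + s * (if j = i then 1 else 0)))
        = (∑ j, A k j * x j) + s * ∑ j, (if j = i then A k j else 0) by
      rw [Finset.mul_sum, ← Finset.sum_add_distrib]
      refine Finset.sum_congr rfl fun j _ => ?_
      by_cases h : j = i <;> simp [h] <;> ring]
    simp [Finset.sum_ite_eq']
  have hl1 : (∑ j, |x j + s * (if j = i then 1 else 0)|)
      = (∑ j, |x j|) + (|x i + s| - |x i|) := by
    have : (∑ j, (|x j + s * (if j = i then 1 else 0)| - |x j|))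
        = |x i + s| - |x i| := by
      rw [Finset.sum_eq_single i]
      · simp
      · intro j _ hj; simp [hj]
      · simp
    rw [Finset.sum_sub_distrib] at this
    linarith
  have hq : (∑ k, ((A *ᵥ fun j => x j + s * (if j = i then 1 else 0)) k - y k) ^ 2)
      = (∑ k, ((A *ᵥ x) k - y k) ^ 2)
        - 2 * s * (∑ k, A k i * (y k - (A *ᵥ x) k)) + s ^ 2 * ∑ k, (A k i) ^ 2 := by
    rw [show (∑ k, ((A *ᵥ fun j => x j + s * (if j = i then 1 else 0)) k - y k) ^ 2)
        = ∑ k, (((A *ᵥ x) k - y k) ^ 2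
          - 2 * s * (A k i * (y k - (A *ᵥ x) k)) + s ^ 2 * (A k i) ^ 2) by
      refine Finset.sum_congr rfl fun k _ => ?_
      rw [hAv k]; ring]
    rw [Finset.sum_add_distrib, Finset.sum_sub_distrib, ← Finset.mul_sum, ← Finset.mul_sum]
  have hξi : (Aᵀ *ᵥ (y - A *ᵥ x)) i = ∑ k, A k i * (y k - (A *ᵥ x) k) := by
    simp [mulVec, dotProduct, transpose_apply]
  unfold obj
  rw [hl1, hq, hξi]
  field_simp
  ring

/-- First-order optimality: at a minimizer, active coordinates satisfy `|ξᵢ| = 1`. -/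
lemma kkt_abs_one (n p : ℕ) (A : Matrix (Fin n) (Fin p) ℝ) (y : Fin n → ℝ) (t : ℝ)
    (ht : 0 < t) (x : Fin p → ℝ)
    (hx : ∀ z : Fin p → ℝ, obj n p A y t x ≤ obj n p A y t z)
    (i : Fin p) (hi : x i ≠ 0) :
    |(Aᵀ *ᵥ (y - A *ᵥ x)) i / t| = 1 := by
  set g : ℝ := (Aᵀ *ᵥ (y - A *ᵥ x)) i / t with hg
  set c : ℝ := (∑ k, (A k i) ^ 2) / (2 * t) with hc
  have hc0 : 0 ≤ c := by
    apply div_nonneg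
    · exact Finset.sum_nonneg fun k _ => sq_nonneg _
    · linarith
  have hkey : ∀ s : ℝ, 0 ≤ |x i + s| - |x i| - s * g + s ^ 2 * c := by
    intro s
    have h := hx (fun j => x j + s * (if j = i then 1 else 0))
    rw [obj_perturb n p A y t ht x i s] at h
    linarith
  -- the sign of x i
  rcases hi.lt_or_gt with hneg | hpos
  · -- x i < 0 : show g = -1
    have hsmall : ∀ ε : ℝ, 0 < ε → ε < -x i → |(-1 : ℝ) - g| ≤ ε * c := by
      intro ε hε hεa
      have h1 := hkey ε
      have h2 := hkey (-ε)
      have e1 : |x i + ε| = |x i| - ε := by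
        rw [abs_of_neg hneg, abs_of_neg (by linarith)]; ring
      have e2 : |x i + -ε| = |x i| + ε := by
        rw [abs_of_neg hneg, abs_of_neg (by linarith)]; ring
      rw [e1] at h1; rw [e2] at h2
      rw [abs_le]
      constructor <;> nlinarith [sq_nonneg ε]
    have : (-1 : ℝ) - g = 0 := by
      by_contra h0
      have hb : 0 < |(-1 : ℝ) - g| := abs_pos.mpr h0
      set b := |(-1 : ℝ) - g|
      set ε := min ((-x i) / 2) (b / (2 * (c + 1)))
      have hε1 : 0 < ε := lt_min (by linarith) (by positivity)
      have hε2 : ε < -x i := lt_of_le_of_lt (min_le_left _ _) (by linarith)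
      have h3 := hsmall ε hε1 hε2
      have hε3 : ε ≤ b / (2 * (c + 1)) := min_le_right _ _
      have : ε * c ≤ (b / (2 * (c + 1))) * c := by
        apply mul_le_mul_of_nonneg_right hε3 hc0
      have hlt : (b / (2 * (c + 1))) * c < b := by
        rw [div_mul_eq_mul_div, div_lt_iff₀ (by positivity)]
        nlinarith
      linarith
    have : g = -1 := by linarith
    rw [this]; simp
  · -- x i > 0 : show g = 1
    have hsmall : ∀ ε : ℝ, 0 < ε → ε < x i → |(1 : ℝ) - g| ≤ ε * c := by
      intro ε hε hεa
      have h1 := hkey ε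
      have h2 := hkey (-ε)
      have e1 : |x i + ε| = |x i| + ε := by
        rw [abs_of_pos hpos, abs_of_pos (by linarith)]
      have e2 : |x i + -ε| = |x i| - ε := by
        rw [abs_of_pos hpos, abs_of_pos (by linarith)]; ring
      rw [e1] at h1; rw [e2] at h2
      rw [abs_le]
      constructor <;> nlinarith [sq_nonneg ε]
    have : (1 : ℝ) - g = 0 := by
      by_contra h0
      have hb : 0 < |(1 : ℝ) - g| := abs_pos.mpr h0
      set b := |(1 : ℝ) - g|
      set ε := min ((x i) / 2) (b / (2 * (c + 1)))
      have hε1 : 0 < ε := lt_min (by linarith) (by positivity)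
      have hε2 : ε < x i := lt_of_le_of_lt (min_le_left _ _) (by linarith)
      have h3 := hsmall ε hε1 hε2
      have hε3 : ε ≤ b / (2 * (c + 1)) := min_le_right _ _
      have : ε * c ≤ (b / (2 * (c + 1))) * c := by
        apply mul_le_mul_of_nonneg_right hε3 hc0
      have hlt : (b / (2 * (c + 1))) * c < b := by
        rw [div_mul_eq_mul_div, div_lt_iff₀ (by positivity)]
        nlinarith
      linarith
    have : g = 1 := by linarith
    rw [this]; simp

/-- If the Gram matrix `(⟨Aeᵢ, Aeⱼ⟩)_{i,j ∈ S ∪ ∂I₀}` is invertible, where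
`S = {i : x*ᵢ ≠ 0}` and `∂I₀ = {i : x*ᵢ = 0 and |ξᵢ| = 1}`, then the minimizer `x*`
is the unique global minimizer of `F`. -/
theorem stmt4 (n p : ℕ) (A : Matrix (Fin n) (Fin p) ℝ) (y : Fin n → ℝ) (t : ℝ)
    (ht : 0 < t) (xs : Fin p → ℝ)
    (hmin : ∀ x : Fin p → ℝ, obj n p A y t xs ≤ obj n p A y t x)
    (ξ : Fin p → ℝ) (hξ : ∀ i, ξ i = (Aᵀ *ᵥ (y - A *ᵥ xs)) i / t)
    (J : Finset (Fin p)) (hJ : ∀ i, i ∈ J ↔ xs i ≠ 0 ∨ (xs i = 0 ∧ |ξ i| = 1))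
    (hGram : IsUnit (Matrix.of fun i j : J => ∑ k, A k i.1 * A k j.1)) :
    ∀ x : Fin p → ℝ, (∀ z : Fin p → ℝ, obj n p A y t x ≤ obj n p A y t z) → x = xs := by
  intro x hx
  have heq : obj n p A y t x = obj n p A y t xs := le_antisymm (hx xs) (hmin x)
  -- Step 1: A x = A xs via the midpoint argument
  have hAx : A *ᵥ x = A *ᵥ xs := by
    set m : Fin p → ℝ := fun j => (x j + xs j) / 2 with hm
    have hAm : ∀ k, (A *ᵥ m) k = ((A *ᵥ x) k + (A *ᵥ xs) k) / 2 := by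
      intro k
      simp only [mulVec, dotProduct, hm]
      rw [← Finset.sum_add_distrib, Finset.sum_div]
      refine Finset.sum_congr rfl fun j _ => ?_
      ring
    have hl1 : (∑ j, |m j|) ≤ ((∑ j, |x j|) + (∑ j, |xs j|)) / 2 := by
      rw [← Finset.sum_add_distrib, Finset.sum_div]
      refine Finset.sum_le_sum fun j _ => ?_
      rw [hm]
      calc |(x j + xs j) / 2| ≤ (|x j| + |xs j|) / 2 := by
            rw [abs_div]
            simp only [abs_two]
            exact div_le_div_of_nonneg_right (abs_add_le _ _) (by norm_num)
        _ = (|x j| + |xs j|) / 2 := rfl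
    have hq : (∑ k, ((A *ᵥ m) k - y k) ^ 2)
        = ((∑ k, ((A *ᵥ x) k - y k) ^ 2) + (∑ k, ((A *ᵥ xs) k - y k) ^ 2)) / 2
          - (∑ k, ((A *ᵥ x) k - (A *ᵥ xs) k) ^ 2) / 4 := by
      rw [show (∑ k, ((A *ᵥ m) k - y k) ^ 2)
          = ∑ k, ((((A *ᵥ x) k - y k) ^ 2 + ((A *ᵥ xs) k - y k) ^ 2) / 2
            - ((A *ᵥ x) k - (A *ᵥ xs) k) ^ 2 / 4) by
        refine Finset.sum_congr rfl fun k _ => ?_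
        rw [hAm k]; ring]
      rw [Finset.sum_sub_distrib, ← Finset.sum_div, ← Finset.sum_div, Finset.sum_add_distrib]
    have hobj : obj n p A y t m
        ≤ obj n p A y t xs - (∑ k, ((A *ᵥ x) k - (A *ᵥ xs) k) ^ 2) / (8 * t) := by
      have e : (((∑ k, ((A *ᵥ x) k - y k) ^ 2) + (∑ k, ((A *ᵥ xs) k - y k) ^ 2)) / 2
          - (∑ k, ((A *ᵥ x) k - (A *ᵥ xs) k) ^ 2) / 4) / (2 * t)
          = ((∑ k, ((A *ᵥ x) k - y k) ^ 2) / (2 * t)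
              + (∑ k, ((A *ᵥ xs) k - y k) ^ 2) / (2 * t)) / 2
            - (∑ k, ((A *ᵥ x) k - (A *ᵥ xs) k) ^ 2) / (8 * t) := by
        field_simp
        ring
      unfold obj at heq ⊢
      rw [hq, e]
      linarith [hl1, heq]
    have hsum0 : (∑ k, ((A *ᵥ x) k - (A *ᵥ xs) k) ^ 2) ≤ 0 := by
      have h1 := hmin m
      have h2 : (∑ k, ((A *ᵥ x) k - (A *ᵥ xs) k) ^ 2) / (8 * t) ≤ 0 := by linarith
      have h8t : (0:ℝ) < 8 * t := by linarith
      by_contra h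
      push_neg at h
      have := div_pos h h8t
      linarith
    have hsum0' : (∑ k, ((A *ᵥ x) k - (A *ᵥ xs) k) ^ 2) = 0 :=
      le_antisymm hsum0 (Finset.sum_nonneg fun k _ => sq_nonneg _)
    funext k
    have := (Finset.sum_eq_zero_iff_of_nonneg (fun k _ => sq_nonneg _)).mp hsum0' k
      (Finset.mem_univ k)
    have := sq_eq_zero_iff.mp this
    linarith
  -- ξ computed from x equals ξ
  have hξx : ∀ i, (Aᵀ *ᵥ (y - A *ᵥ x)) i / t = ξ i := by
    intro i; rw [hξ i, hAx]
  -- Step 2: support of x - xs is contained in J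
  set d : Fin p → ℝ := fun j => x j - xs j with hd
  have hsupp : ∀ i, i ∉ J → d i = 0 := by
    intro i hiJ
    have h1 : ¬(xs i ≠ 0 ∨ (xs i = 0 ∧ |ξ i| = 1)) := fun h => hiJ ((hJ i).mpr h)
    push_neg at h1
    obtain ⟨hxs0, hξ1⟩ := h1
    by_cases hxi : x i = 0
    · simp [hd, hxi, hxs0]
    · exfalso
      have := kkt_abs_one n p A y t ht x hx i hxi
      rw [hξx i] at this
      exact hξ1 hxs0 this
  -- Step 3: A *ᵥ d = 0
  have hAd : A *ᵥ d = 0 := by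
    funext k
    have : (A *ᵥ d) k = (A *ᵥ x) k - (A *ᵥ xs) k := by
      simp only [mulVec, dotProduct, hd]
      rw [← Finset.sum_sub_distrib]
      refine Finset.sum_congr rfl fun j _ => ?_
      ring
    rw [this, hAx]
    simp
  -- Step 4: Gram matrix argument
  set G : Matrix J J ℝ := Matrix.of fun i j : J => ∑ k, A k i.1 * A k j.1 with hG
  set dJ : J → ℝ := fun i => d i.1 with hdJ
  have hJsum : ∀ k, (∑ j ∈ J, A k j * d j) = (A *ᵥ d) k := by
    intro k
    rw [show (A *ᵥ d) k = ∑ j, A k j * d j from rfl]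
    apply Finset.sum_subset (Finset.subset_univ J)
    intro j _ hj
    rw [hsupp j hj, mul_zero]
  have hGd : G *ᵥ dJ = 0 := by
    funext i
    have : (G *ᵥ dJ) i = ∑ k, A k i.1 * (A *ᵥ d) k := by
      calc (G *ᵥ dJ) i = ∑ j : J, (∑ k, A k i.1 * A k j.1) * d j.1 := rfl
        _ = ∑ j : J, ∑ k, A k i.1 * (A k j.1 * d j.1) := by
            refine Finset.sum_congr rfl fun j _ => ?_
            rw [Finset.sum_mul]
            exact Finset.sum_congr rfl fun k _ => by ring
        _ = ∑ k, ∑ j : J, A k i.1 * (A k j.1 * d j.1) := Finset.sum_comm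
        _ = ∑ k, A k i.1 * ∑ j : J, A k j.1 * d j.1 := by
            exact Finset.sum_congr rfl fun k _ => (Finset.mul_sum _ _ _).symm
        _ = ∑ k, A k i.1 * ∑ j ∈ J, A k j * d j := by
            refine Finset.sum_congr rfl fun k _ => ?_
            rw [← Finset.sum_coe_sort J (fun j => A k j * d j)]
        _ = ∑ k, A k i.1 * (A *ᵥ d) k := by
            exact Finset.sum_congr rfl fun k _ => by rw [hJsum k]
    rw [this, hAd]
    simp
  have hinj : Function.Injective (G.mulVec) := Matrix.mulVec_injective_iff_isUnit.mpr hGram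
  have hdJ0 : dJ = 0 := by
    apply hinj
    rw [hGd, Matrix.mulVec_zero]
  funext i
  have hdi : d i = 0 := by
    by_cases hiJ : i ∈ J
    · exact congrFun hdJ0 ⟨i, hiJ⟩
    · exact hsupp i hiJ
  have : x i - xs i = 0 := hdi
  linarith
end
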